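/- For every admissible subgroup L of ℤ × ℤ, the truncated-hexagonal torus graph G(L) — the edge graph of the semi-equivelar map of type {3,12,12} on the torus determined by L — is 3-connected. -/
import Mathlib


/-- `e₁ = (1,0)` in `ℤ × ℤ`. -/
def e₁ : ℤ × ℤ := (1, 0)

/-- `e₂ = (0,1)` in `ℤ × ℤ`. -/
def e₂ : ℤ × ℤ := (0, 1)

/-- A subgroup `L ≤ ℤ × ℤ` is admissible if it has finite index and contains no nonzero
vector `(v₁, v₂)` with `|v₁| ≤ 2` and `|v₂| ≤ 2`. -/
def Admissible (L : AddSubgroup (ℤ × ℤ)) : Prop :=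
  Finite ((ℤ × ℤ) ⧸ L) ∧ ∀ v ∈ L, v ≠ 0 → ¬(|v.1| ≤ 2 ∧ |v.2| ≤ 2)

/-- A graph is Hamiltonian if it contains a cycle visiting every vertex (exactly once:
a cycle repeats no vertex other than its basepoint). -/
def SimpleGraph.Hamiltonian {α : Type*} (G : SimpleGraph α) : Prop :=
  ∃ (a : α) (p : G.Walk a a), p.IsCycle ∧ ∀ v, v ∈ p.support

/-- A finite simple graph is `k`-connected if it has more than `k` vertices and for every
set `S` of fewer than `k` vertices, the subgraph induced on the complement of `S` is
connected. -/
def SimpleGraph.KConnected {α : Type*} (k : ℕ) (G : SimpleGraph α) : Prop :=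
  k < Nat.card α ∧ ∀ S : Finset α, S.card < k → (G.induce (↑S : Set α)ᶜ).Connected

/-- The edge relation of the truncated-hexagonal graph over an abelian group `A`:
triangles `(x,ε,j)–(x,ε,j′)` for `j ≠ j′`, together with the perfect matching
`(x,0,0)–(x,1,0)`, `(x,0,1)–(x−E₁,1,1)`, `(x,0,2)–(x−E₂,1,2)`. -/
def truncHexRel {A : Type*} [AddCommGroup A] (E₁ E₂ : A) :
    A × Fin 2 × Fin 3 → A × Fin 2 × Fin 3 → Prop := fun u v =>
  (∃ (x : A) (ε : Fin 2) (j j' : Fin 3), j ≠ j' ∧ u = (x, ε, j) ∧ v = (x, ε, j')) ∨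
  (∃ x : A, u = (x, 0, 0) ∧ v = (x, 1, 0)) ∨
  (∃ x : A, u = (x, 0, 1) ∧ v = (x - E₁, 1, 1)) ∨
  (∃ x : A, u = (x, 0, 2) ∧ v = (x - E₂, 1, 2))

/-- The truncated-hexagonal graph over an abelian group `A`. -/
def truncHexGraph {A : Type*} [AddCommGroup A] (E₁ E₂ : A) :
    SimpleGraph (A × Fin 2 × Fin 3) :=
  SimpleGraph.fromRel (truncHexRel E₁ E₂)

/-- The truncated-hexagonal torus graph `G(L)`, the edge graph of the semi-equivelar map
of type `{3,12,12}` on the torus determined by `L`. -/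
def truncHexTorusGraph (L : AddSubgroup (ℤ × ℤ)) :
    SimpleGraph (((ℤ × ℤ) ⧸ L) × Fin 2 × Fin 3) :=
  truncHexGraph (QuotientAddGroup.mk e₁) (QuotientAddGroup.mk e₂)

/-! ### Auxiliary machinery for the 3-connectivity proof -/

namespace THTaux

/-- The abstract core lemma: connectivity of the "triangle level" structure.
`ρ` is an abstract reachability relation on `Q × Fin 2`, `alive x a` says the matching
edge of type `a` at `x` has both endpoints surviving.  Assuming at most one dead edge
of type `i`, none of type `j`, and at most two of type `k` (expressed by `Hk`), plus the
group-theoretic nondegeneracy conditions, everything is `ρ`-connected. -/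
theorem core_reach {Q : Type*} [AddCommGroup Q]
    (s : Fin 3 → Q) (alive : Q → Fin 3 → Prop)
    (ρ : Q × Fin 2 → Q × Fin 2 → Prop)
    (hrefl : ∀ u, ρ u u)
    (hsymm : ∀ u v, ρ u v → ρ v u)
    (htrans : ∀ u v w, ρ u v → ρ v w → ρ u w)
    (hstep : ∀ x a, alive x a → ρ (x, 0) (x - s a, 1))
    (i j k : Fin 3)
    (hfin : ∃ n : ℕ, (n + 1) • (s i - s j) = 0)
    (Hj : ∀ x, alive x j)
    (Hi : ∀ x y, ¬ alive x i → ¬ alive y i → x = y)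
    (Hk : ∀ x, alive x k ∨ alive (x + (s i - s j)) k ∨ alive (x + (s i - s j) + (s i - s j)) k)
    (htop : ∀ q : Q, q ∈ AddSubgroup.closure ({s j - s k, s i - s j} : Set Q)) :
    ∀ u v, ρ u v := by
  set g := s i - s j with hg
  set h := s j - s k with hh
  -- the basic two-edge move along a row
  have M2 : ∀ y, alive (y + g) i → ρ (y, 0) (y + g, 0) := by
    intro y hi'
    have h1 := hstep y j (Hj y)
    have h2 := hstep (y + g) i hi'
    rw [show y + g - s i = y - s j by rw [hg]; abel] at h2
    exact htrans _ _ _ h1 (hsymm _ _ h2)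
  obtain ⟨n, hn⟩ := hfin
  have hng : n • g = -g := by
    rw [succ_nsmul] at hn
    exact eq_neg_of_add_eq_zero_left hn
  have gstep : ∀ x, ρ (x, 0) (x + g, 0) := by
    intro x
    by_cases hx : alive (x + g) i
    · exact M2 x hx
    · have chain : ∀ p : ℕ, ρ (x + g, 0) (x + g + p • g, 0) := by
        intro p
        induction p with
        | zero => simpa using hrefl ((x + g, 0) : Q × Fin 2)
        | succ p ih =>
          by_cases hd : alive (x + g + (p + 1) • g) i
          · have step := M2 (x + g + p • g) (by
              rwa [show x + g + p • g + g = x + g + (p + 1) • g by rw [succ_nsmul]; abel])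
            rw [show x + g + p • g + g = x + g + (p + 1) • g by rw [succ_nsmul]; abel] at step
            exact htrans _ _ _ ih step
          · rw [Hi _ _ hd hx]
            exact hrefl _
      have final := chain n
      rw [hng, show x + g + -g = x by abel] at final
      exact hsymm _ _ final
  have M3 : ∀ y, alive y k → ρ (y, 0) (y + h, 0) := by
    intro y hk'
    have h1 := hstep y k hk'
    have h2 := hstep (y + h) j (Hj _)
    rw [show y + h - s j = y - s k by rw [hh]; abel] at h2
    exact htrans _ _ _ h1 (hsymm _ _ h2)
  have hstepT : ∀ x, ρ (x, 0) (x + h, 0) := by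
    intro x
    rcases Hk x with hk' | hk' | hk'
    · exact M3 x hk'
    · have r1 := gstep x
      have r2 := M3 (x + g) hk'
      have r3 : ρ (x + h, 0) (x + g + h, 0) := by
        have := gstep (x + h)
        rwa [show x + h + g = x + g + h by abel] at this
      exact htrans _ _ _ (htrans _ _ _ r1 r2) (hsymm _ _ r3)
    · have r1 := htrans _ _ _ (gstep x) (gstep (x + g))
      have r2 := M3 (x + g + g) hk'
      have r3 : ρ (x + h, 0) (x + g + g + h, 0) := by
        have t1 := gstep (x + h)
        have t2 := gstep (x + h + g)
        have t3 := htrans _ _ _ t1 t2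
        rwa [show x + h + g + g = x + g + g + h by abel] at t3
      exact htrans _ _ _ (htrans _ _ _ r1 r2) (hsymm _ _ r3)
  -- subgroup of realized translations
  let T : AddSubgroup Q :=
    { carrier := {q | ∀ x, ρ (x, 0) (x + q, 0)}
      zero_mem' := by intro x; simpa using hrefl ((x, 0) : Q × Fin 2)
      add_mem' := by
        intro a b ha hb x
        have h1 := ha x
        have h2 := hb (x + a)
        rw [show x + a + b = x + (a + b) by abel] at h2
        exact htrans _ _ _ h1 h2
      neg_mem' := by
        intro a ha x
        have h1 := ha (x + -a)
        rw [show x + -a + a = x by abel] at h1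
        exact hsymm _ _ h1 }
  have hall : ∀ q : Q, ∀ x, ρ (x, 0) (x + q, 0) := by
    intro q
    have hle : AddSubgroup.closure ({h, g} : Set Q) ≤ T := by
      rw [AddSubgroup.closure_le]
      rintro y (rfl | rfl)
      · exact hstepT
      · exact gstep
    exact hle (htop q)
  have key : ∀ x y : Q, ρ (x, 0) (y, 0) := by
    intro x y
    have hxy := hall (y - x) x
    rwa [show x + (y - x) = y by abel] at hxy
  have att : ∀ x : Q, ρ (x, 1) (x + s j, 0) := by
    intro x
    have h2 := hstep (x + s j) j (Hj _)
    rw [show x + s j - s j = x by abel] at h2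
    exact hsymm _ _ h2
  intro u v
  obtain ⟨xu, eu⟩ := u
  obtain ⟨xv, ev⟩ := v
  fin_cases eu <;> fin_cases ev
  · exact key xu xv
  · exact htrans _ _ _ (key xu (xv + s j)) (hsymm _ _ (att xv))
  · exact htrans _ _ _ (att xu) (key _ xv)
  · exact htrans _ _ _ (att xu) (htrans _ _ _ (key _ (xv + s j)) (hsymm _ _ (att xv)))

abbrev QL (L : AddSubgroup (ℤ × ℤ)) := (ℤ × ℤ) ⧸ L
abbrev VL (L : AddSubgroup (ℤ × ℤ)) := QL L × Fin 2 × Fin 3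

variable (L : AddSubgroup (ℤ × ℤ))

/-- The shift associated to each matching type. -/
def sh : Fin 3 → QL L := fun a =>
  match a with
  | 0 => 0
  | 1 => QuotientAddGroup.mk e₁
  | 2 => QuotientAddGroup.mk e₂

lemma cancel_aux {Q : Type*} [AddCommGroup Q] {x g : Q} (e : x = x + g) : g = 0 := by
  calc g = (x + g) - x := by abel
  _ = x - x := by rw [← e]
  _ = 0 := sub_self x

/-- adjacency within a triangle -/
lemma adj_tri (x : QL L) (ε : Fin 2) {c c' : Fin 3} (h : c ≠ c') :
    (truncHexTorusGraph L).Adj (x, ε, c) (x, ε, c') := by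
  rw [truncHexTorusGraph, truncHexGraph, SimpleGraph.fromRel_adj]
  refine ⟨by simp [Prod.ext_iff, h], Or.inl (Or.inl ⟨x, ε, c, c', h, rfl, rfl⟩)⟩

/-- adjacency along a matching edge -/
lemma adj_match (x : QL L) (a : Fin 3) :
    (truncHexTorusGraph L).Adj (x, 0, a) (x - sh L a, 1, a) := by
  rw [truncHexTorusGraph, truncHexGraph, SimpleGraph.fromRel_adj]
  refine ⟨by simp [Prod.ext_iff], Or.inl ?_⟩
  fin_cases a
  · exact Or.inr (Or.inl ⟨x, rfl, by simp [sh]⟩)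
  · exact Or.inr (Or.inr (Or.inl ⟨x, rfl, by simp [sh]⟩))
  · exact Or.inr (Or.inr (Or.inr ⟨x, rfl, by simp [sh]⟩))

variable (S : Finset (VL L))

/-- reachability between survivors in the induced graph -/
def rr (u v : VL L) : Prop :=
  ∃ (hu : u ∈ (↑S : Set (VL L))ᶜ) (hv : v ∈ (↑S : Set (VL L))ᶜ),
    ((truncHexTorusGraph L).induce (↑S : Set (VL L))ᶜ).Reachable ⟨u, hu⟩ ⟨v, hv⟩

lemma rr_refl {u : VL L} (hu : u ∉ S) : rr L S u u :=
  ⟨by simpa using hu, by simpa using hu, SimpleGraph.Reachable.refl _⟩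

lemma rr_symm {u v : VL L} (h : rr L S u v) : rr L S v u := by
  obtain ⟨hu, hv, r⟩ := h; exact ⟨hv, hu, r.symm⟩

lemma rr_trans {u v w : VL L} (h : rr L S u v) (h' : rr L S v w) : rr L S u w := by
  obtain ⟨hu, hv, r⟩ := h; obtain ⟨hv', hw, r'⟩ := h'
  exact ⟨hu, hw, r.trans r'⟩

lemma rr_adj {u v : VL L} (hu : u ∉ S) (hv : v ∉ S)
    (h : (truncHexTorusGraph L).Adj u v) : rr L S u v :=
  ⟨by simpa using hu, by simpa using hv, SimpleGraph.Adj.reachable h⟩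

lemma rr_tri {x : QL L} {ε : Fin 2} {c c' : Fin 3}
    (hx : (x, ε, c) ∉ S) (hy : (x, ε, c') ∉ S) : rr L S (x, ε, c) (x, ε, c') := by
  by_cases h : c = c'
  · subst h; exact rr_refl L S hx
  · exact rr_adj L S hx hy (adj_tri L x ε h)

/-- triangle-level reachability -/
def TR (t t' : QL L × Fin 2) : Prop :=
  ∃ c c' : Fin 3, rr L S (t.1, t.2, c) (t'.1, t'.2, c')

/-- the matching edge of type `a` at `x` survives -/
def aliveF (x : QL L) (a : Fin 3) : Prop :=
  (x, 0, a) ∉ S ∧ (x - sh L a, 1, a) ∉ S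

lemma tr_symm : ∀ u v, TR L S u v → TR L S v u := by
  rintro u v ⟨c, c', h⟩; exact ⟨c', c, rr_symm L S h⟩

lemma tr_trans : ∀ u v w, TR L S u v → TR L S v w → TR L S u w := by
  rintro u v w ⟨c, c', h⟩ ⟨d, d', h'⟩
  refine ⟨c, d', rr_trans L S h (rr_trans L S ?_ h')⟩
  obtain ⟨_, hv, _⟩ := h
  obtain ⟨hv', _, _⟩ := h'
  exact rr_tri L S (by simpa using hv) (by simpa using hv')

lemma tr_refl (hsurv : ∀ (x : QL L) (ε : Fin 2), ∃ c, (x, ε, c) ∉ S) :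
    ∀ u, TR L S u u := by
  intro u
  obtain ⟨c, hc⟩ := hsurv u.1 u.2
  exact ⟨c, c, rr_refl L S hc⟩

lemma tr_step : ∀ (x : QL L) (a : Fin 3), aliveF L S x a →
    TR L S (x, 0) (x - sh L a, 1) := by
  intro x a ha
  exact ⟨a, a, rr_adj L S ha.1 ha.2 (adj_match L x a)⟩

/-- which matching edge a deleted vertex destroys -/
def killer (w : VL L) : QL L × Fin 3 :=
  (if w.2.1 = 0 then w.1 else w.1 + sh L w.2.2, w.2.2)

lemma dead_killer {w₁ w₂ : VL L} (hS : ∀ w ∈ S, w = w₁ ∨ w = w₂)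
    {x : QL L} {a : Fin 3} (hx : ¬ aliveF L S x a) :
    (x, a) = killer L w₁ ∨ (x, a) = killer L w₂ := by
  rw [aliveF, not_and_or, not_not, not_not] at hx
  rcases hx with h | h
  · rcases hS _ h with e | e
    · left; rw [← e]; simp [killer]
    · right; rw [← e]; simp [killer]
  · rcases hS _ h with e | e
    · left; rw [← e]; simp [killer, sub_add_cancel]
    · right; rw [← e]; simp [killer, sub_add_cancel]

lemma mk_decomp (v : ℤ × ℤ) :
    (QuotientAddGroup.mk v : QL L) =
      v.1 • (QuotientAddGroup.mk e₁ : QL L) + v.2 • QuotientAddGroup.mk e₂ := by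
  have hv : v = v.1 • e₁ + v.2 • e₂ := by
    refine Prod.ext ?_ ?_ <;> simp [e₁, e₂]
  conv_lhs => rw [hv]
  rw [QuotientAddGroup.mk_add, QuotientAddGroup.mk_zsmul, QuotientAddGroup.mk_zsmul]

lemma top_mem (g h' : QL L)
    (hE1 : (QuotientAddGroup.mk e₁ : QL L) ∈ AddSubgroup.closure {h', g})
    (hE2 : (QuotientAddGroup.mk e₂ : QL L) ∈ AddSubgroup.closure {h', g}) :
    ∀ q : QL L, q ∈ AddSubgroup.closure ({h', g} : Set (QL L)) := by
  intro q
  obtain ⟨v, rfl⟩ := QuotientAddGroup.mk_surjective q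
  rw [mk_decomp]
  exact AddSubgroup.add_mem _ (AddSubgroup.zsmul_mem _ hE1 _) (AddSubgroup.zsmul_mem _ hE2 _)

lemma boxne (hbox : ∀ v ∈ L, v ≠ 0 → ¬(|v.1| ≤ 2 ∧ |v.2| ≤ 2)) (v : ℤ × ℤ)
    (hv : v ≠ 0) (h1 : |v.1| ≤ 2) (h2 : |v.2| ≤ 2) :
    (QuotientAddGroup.mk v : QL L) ≠ 0 := by
  intro h0
  rw [QuotientAddGroup.eq_zero_iff] at h0
  exact hbox v h0 hv ⟨h1, h2⟩

/-- The main combinatorial step: apply `core_reach` for a suitable choice of types. -/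
lemma run [Finite (QL L)]
    (hsurv : ∀ (x : QL L) (ε : Fin 2), ∃ c, (x, ε, c) ∉ S)
    (y₁ y₂ : QL L) (b₁ b₂ : Fin 3)
    (hdead : ∀ x a, ¬ aliveF L S x a → ((x, a) = (y₁, b₁) ∨ (x, a) = (y₂, b₂)))
    (i j k : Fin 3)
    (h1 : b₁ ≠ j) (h2 : b₂ ≠ j) (h3 : ¬(b₁ = i ∧ b₂ = i))
    (hg0 : sh L i - sh L j ≠ 0)
    (hgg0 : (sh L i - sh L j) + (sh L i - sh L j) ≠ 0)
    (htop : ∀ q, q ∈ AddSubgroup.closure ({sh L j - sh L k, sh L i - sh L j} : Set (QL L))) :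
    ∀ t t', TR L S t t' := by
  apply core_reach (sh L) (aliveF L S) (TR L S) (tr_refl L S hsurv) (tr_symm L S)
    (tr_trans L S) (tr_step L S) i j k ?_ ?_ ?_ ?_ htop
  · refine ⟨addOrderOf (sh L i - sh L j) - 1, ?_⟩
    rw [Nat.sub_add_cancel (addOrderOf_pos _)]
    exact addOrderOf_nsmul_eq_zero _
  · intro x
    by_contra hdx
    rcases hdead x j hdx with e | e <;> simp [Prod.ext_iff] at e
    · exact h1 e.2.symm
    · exact h2 e.2.symm
  · intro x y hx hy
    rcases hdead x i hx with ex | ex <;> rcases hdead y i hy with ey | ey <;>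
      simp [Prod.ext_iff] at ex ey
    · rw [ex.1, ey.1]
    · exact absurd ⟨ex.2.symm, ey.2.symm⟩ h3
    · exact absurd ⟨ey.2.symm, ex.2.symm⟩ h3
    · rw [ex.1, ey.1]
  · intro x
    by_contra hc
    push_neg at hc
    obtain ⟨d1, d2, d3⟩ := hc
    have h12 : ∀ z : QL L, ¬(x = z ∧ x + (sh L i - sh L j) = z) := by
      rintro z ⟨a, b⟩; exact hg0 (cancel_aux (a.trans b.symm))
    have h13 : ∀ z : QL L,
        ¬(x = z ∧ x + (sh L i - sh L j) + (sh L i - sh L j) = z) := by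
      rintro z ⟨a, b⟩
      have ab : x = x + (sh L i - sh L j) + (sh L i - sh L j) := a.trans b.symm
      rw [add_assoc] at ab
      exact hgg0 (cancel_aux ab)
    have h23 : ∀ z : QL L,
        ¬(x + (sh L i - sh L j) = z ∧ x + (sh L i - sh L j) + (sh L i - sh L j) = z) := by
      rintro z ⟨a, b⟩; exact hg0 (cancel_aux (a.trans b.symm))
    rcases hdead x k d1 with e1 | e1 <;> rcases hdead _ k d2 with e2 | e2 <;>
      rcases hdead _ k d3 with e3 | e3 <;> simp [Prod.ext_iff] at e1 e2 e3
    · exact h12 y₁ ⟨e1.1, e2.1⟩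
    · exact h12 y₁ ⟨e1.1, e2.1⟩
    · exact h13 y₁ ⟨e1.1, e3.1⟩
    · exact h23 y₂ ⟨e2.1, e3.1⟩
    · exact h23 y₁ ⟨e2.1, e3.1⟩
    · exact h13 y₂ ⟨e1.1, e3.1⟩
    · exact h12 y₂ ⟨e1.1, e2.1⟩
    · exact h12 y₂ ⟨e1.1, e2.1⟩

lemma conn_of_TR (hne : ∃ v : VL L, v ∉ S)
    (h : ∀ t t' : QL L × Fin 2, TR L S t t') :
    ((truncHexTorusGraph L).induce (↑S : Set (VL L))ᶜ).Connected := by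
  rw [SimpleGraph.connected_iff]
  constructor
  · rintro ⟨⟨xu, eu, cu⟩, hu⟩ ⟨⟨xv, ev, cv⟩, hv⟩
    have hu' : ((xu, eu, cu) : VL L) ∉ S := by simpa using hu
    have hv' : ((xv, ev, cv) : VL L) ∉ S := by simpa using hv
    obtain ⟨c, c', hcc⟩ := h (xu, eu) (xv, ev)
    have hw1 : ((xu, eu, c) : VL L) ∉ S := by
      obtain ⟨hw, _, _⟩ := hcc; simpa using hw
    have hw2 : ((xv, ev, c') : VL L) ∉ S := by
      obtain ⟨_, hw, _⟩ := hcc; simpa using hw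
    have r1 : rr L S (xu, eu, cu) (xu, eu, c) := rr_tri L S hu' hw1
    have r2 : rr L S (xv, ev, c') (xv, ev, cv) := rr_tri L S hw2 hv'
    obtain ⟨p1, p2, r⟩ := rr_trans L S r1 (rr_trans L S hcc r2)
    exact r
  · obtain ⟨v, hv⟩ := hne
    exact ⟨⟨v, by simpa using hv⟩⟩

lemma two_elems {α : Type*} [Nonempty α] (S : Finset α) (h : S.card ≤ 2) :
    ∃ a b : α, ∀ x ∈ S, x = a ∨ x = b := by
  classical
  rcases S.eq_empty_or_nonempty with rfl | ⟨a, ha⟩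
  · exact ⟨Classical.arbitrary α, Classical.arbitrary α, by simp⟩
  · rcases (S.erase a).eq_empty_or_nonempty with he | ⟨b, hb⟩
    · refine ⟨a, a, fun x hx => ?_⟩
      by_cases hxa : x = a
      · exact Or.inl hxa
      · exact absurd (Finset.mem_erase.mpr ⟨hxa, hx⟩) (by simp [he])
    · refine ⟨a, b, fun x hx => ?_⟩
      by_cases hxa : x = a
      · exact Or.inl hxa
      · right
        have hcard : (S.erase a).card ≤ 1 := by
          have := Finset.card_erase_of_mem ha; omega
        exact Finset.card_le_one.mp hcard x (Finset.mem_erase.mpr ⟨hxa, hx⟩) b hb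

lemma surv_of_two (w₁ w₂ : VL L) (hS : ∀ w ∈ S, w = w₁ ∨ w = w₂) :
    ∀ (x : QL L) (ε : Fin 2), ∃ c, (x, ε, c) ∉ S := by
  have third : ∀ a b : Fin 3, ∃ c : Fin 3, c ≠ a ∧ c ≠ b := by decide
  intro x ε
  obtain ⟨c, hc1, hc2⟩ := third w₁.2.2 w₂.2.2
  refine ⟨c, fun hc => ?_⟩
  rcases hS _ hc with e | e
  · exact hc1 (by rw [← e])
  · exact hc2 (by rw [← e])

lemma TR_all [Finite (QL L)]
    (hbox : ∀ v ∈ L, v ≠ 0 → ¬(|v.1| ≤ 2 ∧ |v.2| ≤ 2))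
    (w₁ w₂ : VL L) (hS : ∀ w ∈ S, w = w₁ ∨ w = w₂) :
    ∀ t t', TR L S t t' := by
  classical
  have hsurv := surv_of_two L S w₁ w₂ hS
  obtain ⟨y₁, b₁, hk1⟩ : ∃ y b, killer L w₁ = (y, b) := ⟨_, _, rfl⟩
  obtain ⟨y₂, b₂, hk2⟩ : ∃ y b, killer L w₂ = (y, b) := ⟨_, _, rfl⟩
  have hdead : ∀ x a, ¬ aliveF L S x a → ((x, a) = (y₁, b₁) ∨ (x, a) = (y₂, b₂)) := by
    intro x a hx
    rcases dead_killer L S hS hx with e | e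
    · left; rw [e, hk1]
    · right; rw [e, hk2]
  -- basic nonzero facts
  have ne1 : (QuotientAddGroup.mk e₁ : QL L) ≠ 0 :=
    boxne L hbox e₁ (by norm_num [e₁, Prod.ext_iff]) (by norm_num [e₁]) (by norm_num [e₁])
  have ne2 : (QuotientAddGroup.mk e₂ : QL L) ≠ 0 :=
    boxne L hbox e₂ (by norm_num [e₂, Prod.ext_iff]) (by norm_num [e₂]) (by norm_num [e₂])
  have ne12 : (QuotientAddGroup.mk e₁ : QL L) - QuotientAddGroup.mk e₂ ≠ 0 := by
    rw [← QuotientAddGroup.mk_sub]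
    exact boxne L hbox (e₁ - e₂) (by norm_num [e₁, e₂, Prod.ext_iff])
      (by norm_num [e₁, e₂]) (by norm_num [e₁, e₂])
  have d1 : (QuotientAddGroup.mk e₁ : QL L) + QuotientAddGroup.mk e₁ ≠ 0 := by
    rw [← QuotientAddGroup.mk_add]
    exact boxne L hbox (e₁ + e₁) (by norm_num [e₁, Prod.ext_iff]) (by norm_num [e₁])
      (by norm_num [e₁])
  have d2 : (QuotientAddGroup.mk e₂ : QL L) + QuotientAddGroup.mk e₂ ≠ 0 := by
    rw [← QuotientAddGroup.mk_add]
    exact boxne L hbox (e₂ + e₂) (by norm_num [e₂, Prod.ext_iff]) (by norm_num [e₂])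
      (by norm_num [e₂])
  have d12 : ((QuotientAddGroup.mk e₁ : QL L) - QuotientAddGroup.mk e₂) +
      ((QuotientAddGroup.mk e₁ : QL L) - QuotientAddGroup.mk e₂) ≠ 0 := by
    rw [← QuotientAddGroup.mk_sub, ← QuotientAddGroup.mk_add]
    exact boxne L hbox ((e₁ - e₂) + (e₁ - e₂)) (by norm_num [e₁, e₂, Prod.ext_iff])
      (by norm_num [e₁, e₂]) (by norm_num [e₁, e₂])
  fin_cases b₁ <;> fin_cases b₂
  -- (0,0) : (i,j,k) = (1,2,0)
  · refine run L S hsurv y₁ y₂ _ _ hdead 1 2 0 (by decide) (by decide) (by decide) ?_ ?_ ?_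
    · simpa [sh] using ne12
    · simpa [sh] using d12
    · simp only [sh, sub_zero]
      apply top_mem
      · have m1 : (QuotientAddGroup.mk e₂ : QL L) ∈
            AddSubgroup.closure {(QuotientAddGroup.mk e₂ : QL L),
              QuotientAddGroup.mk e₁ - QuotientAddGroup.mk e₂} :=
          AddSubgroup.subset_closure (by simp)
        have m2 : (QuotientAddGroup.mk e₁ : QL L) - QuotientAddGroup.mk e₂ ∈
            AddSubgroup.closure {(QuotientAddGroup.mk e₂ : QL L),
              QuotientAddGroup.mk e₁ - QuotientAddGroup.mk e₂} :=
          AddSubgroup.subset_closure (by simp)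
        have := AddSubgroup.add_mem _ m2 m1
        rwa [sub_add_cancel] at this
      · exact AddSubgroup.subset_closure (by simp)
  -- (0,1) : (i,j,k) = (0,2,1)
  · refine run L S hsurv y₁ y₂ _ _ hdead 0 2 1 (by decide) (by decide) (by decide) ?_ ?_ ?_
    · simp only [sh, zero_sub]
      exact neg_ne_zero.mpr ne2
    · simp only [sh, zero_sub, ← neg_add]
      exact neg_ne_zero.mpr d2
    · simp only [sh, zero_sub]
      apply top_mem
      · have m1 : (QuotientAddGroup.mk e₂ : QL L) - QuotientAddGroup.mk e₁ ∈
            AddSubgroup.closure {(QuotientAddGroup.mk e₂ : QL L) - QuotientAddGroup.mk e₁,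
              -(QuotientAddGroup.mk e₂ : QL L)} := AddSubgroup.subset_closure (by simp)
        have m2 : -(QuotientAddGroup.mk e₂ : QL L) ∈
            AddSubgroup.closure {(QuotientAddGroup.mk e₂ : QL L) - QuotientAddGroup.mk e₁,
              -(QuotientAddGroup.mk e₂ : QL L)} := AddSubgroup.subset_closure (by simp)
        have := AddSubgroup.neg_mem _ (AddSubgroup.add_mem _ m1 m2)
        rwa [show -((QuotientAddGroup.mk e₂ : QL L) - QuotientAddGroup.mk e₁ +
          -(QuotientAddGroup.mk e₂ : QL L)) = QuotientAddGroup.mk e₁ by abel] at this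
      · have m2 : -(QuotientAddGroup.mk e₂ : QL L) ∈
            AddSubgroup.closure {(QuotientAddGroup.mk e₂ : QL L) - QuotientAddGroup.mk e₁,
              -(QuotientAddGroup.mk e₂ : QL L)} := AddSubgroup.subset_closure (by simp)
        have := AddSubgroup.neg_mem _ m2
        rwa [neg_neg] at this
  -- (0,2) : (i,j,k) = (0,1,2)
  · refine run L S hsurv y₁ y₂ _ _ hdead 0 1 2 (by decide) (by decide) (by decide) ?_ ?_ ?_
    · simp only [sh, zero_sub]
      exact neg_ne_zero.mpr ne1
    · simp only [sh, zero_sub, ← neg_add]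
      exact neg_ne_zero.mpr d1
    · simp only [sh, zero_sub]
      apply top_mem
      · have m2 : -(QuotientAddGroup.mk e₁ : QL L) ∈
            AddSubgroup.closure {(QuotientAddGroup.mk e₁ : QL L) - QuotientAddGroup.mk e₂,
              -(QuotientAddGroup.mk e₁ : QL L)} := AddSubgroup.subset_closure (by simp)
        have := AddSubgroup.neg_mem _ m2
        rwa [neg_neg] at this
      · have m1 : (QuotientAddGroup.mk e₁ : QL L) - QuotientAddGroup.mk e₂ ∈
            AddSubgroup.closure {(QuotientAddGroup.mk e₁ : QL L) - QuotientAddGroup.mk e₂,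
              -(QuotientAddGroup.mk e₁ : QL L)} := AddSubgroup.subset_closure (by simp)
        have m2 : -(QuotientAddGroup.mk e₁ : QL L) ∈
            AddSubgroup.closure {(QuotientAddGroup.mk e₁ : QL L) - QuotientAddGroup.mk e₂,
              -(QuotientAddGroup.mk e₁ : QL L)} := AddSubgroup.subset_closure (by simp)
        have := AddSubgroup.neg_mem _ (AddSubgroup.add_mem _ m1 m2)
        rwa [show -((QuotientAddGroup.mk e₁ : QL L) - QuotientAddGroup.mk e₂ +
          -(QuotientAddGroup.mk e₁ : QL L)) = QuotientAddGroup.mk e₂ by abel] at this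
  -- (1,0) : (i,j,k) = (1,2,0)
  · refine run L S hsurv y₁ y₂ _ _ hdead 1 2 0 (by decide) (by decide) (by decide) ?_ ?_ ?_
    · simpa [sh] using ne12
    · simpa [sh] using d12
    · simp only [sh, sub_zero]
      apply top_mem
      · have m1 : (QuotientAddGroup.mk e₂ : QL L) ∈
            AddSubgroup.closure {(QuotientAddGroup.mk e₂ : QL L),
              QuotientAddGroup.mk e₁ - QuotientAddGroup.mk e₂} :=
          AddSubgroup.subset_closure (by simp)
        have m2 : (QuotientAddGroup.mk e₁ : QL L) - QuotientAddGroup.mk e₂ ∈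
            AddSubgroup.closure {(QuotientAddGroup.mk e₂ : QL L),
              QuotientAddGroup.mk e₁ - QuotientAddGroup.mk e₂} :=
          AddSubgroup.subset_closure (by simp)
        have := AddSubgroup.add_mem _ m2 m1
        rwa [sub_add_cancel] at this
      · exact AddSubgroup.subset_closure (by simp)
  -- (1,1) : (i,j,k) = (0,2,1)
  · refine run L S hsurv y₁ y₂ _ _ hdead 0 2 1 (by decide) (by decide) (by decide) ?_ ?_ ?_
    · simp only [sh, zero_sub]
      exact neg_ne_zero.mpr ne2
    · simp only [sh, zero_sub, ← neg_add]
      exact neg_ne_zero.mpr d2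
    · simp only [sh, zero_sub]
      apply top_mem
      · have m1 : (QuotientAddGroup.mk e₂ : QL L) - QuotientAddGroup.mk e₁ ∈
            AddSubgroup.closure {(QuotientAddGroup.mk e₂ : QL L) - QuotientAddGroup.mk e₁,
              -(QuotientAddGroup.mk e₂ : QL L)} := AddSubgroup.subset_closure (by simp)
        have m2 : -(QuotientAddGroup.mk e₂ : QL L) ∈
            AddSubgroup.closure {(QuotientAddGroup.mk e₂ : QL L) - QuotientAddGroup.mk e₁,
              -(QuotientAddGroup.mk e₂ : QL L)} := AddSubgroup.subset_closure (by simp)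
        have := AddSubgroup.neg_mem _ (AddSubgroup.add_mem _ m1 m2)
        rwa [show -((QuotientAddGroup.mk e₂ : QL L) - QuotientAddGroup.mk e₁ +
          -(QuotientAddGroup.mk e₂ : QL L)) = QuotientAddGroup.mk e₁ by abel] at this
      · have m2 : -(QuotientAddGroup.mk e₂ : QL L) ∈
            AddSubgroup.closure {(QuotientAddGroup.mk e₂ : QL L) - QuotientAddGroup.mk e₁,
              -(QuotientAddGroup.mk e₂ : QL L)} := AddSubgroup.subset_closure (by simp)
        have := AddSubgroup.neg_mem _ m2
        rwa [neg_neg] at this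
  -- (1,2) : (i,j,k) = (1,0,2)
  · refine run L S hsurv y₁ y₂ _ _ hdead 1 0 2 (by decide) (by decide) (by decide) ?_ ?_ ?_
    · simpa [sh, sub_zero] using ne1
    · simpa [sh, sub_zero] using d1
    · simp only [sh, sub_zero, zero_sub]
      apply top_mem
      · exact AddSubgroup.subset_closure (by simp)
      · have m1 : -(QuotientAddGroup.mk e₂ : QL L) ∈
            AddSubgroup.closure {-(QuotientAddGroup.mk e₂ : QL L),
              (QuotientAddGroup.mk e₁ : QL L)} := AddSubgroup.subset_closure (by simp)
        have := AddSubgroup.neg_mem _ m1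
        rwa [neg_neg] at this
  -- (2,0) : (i,j,k) = (2,1,0)
  · refine run L S hsurv y₁ y₂ _ _ hdead 2 1 0 (by decide) (by decide) (by decide) ?_ ?_ ?_
    · rw [show sh L 2 - sh L 1 = -((QuotientAddGroup.mk e₁ : QL L) -
        QuotientAddGroup.mk e₂) by simp [sh]]
      exact neg_ne_zero.mpr ne12
    · rw [show sh L 2 - sh L 1 + (sh L 2 - sh L 1) =
        -(((QuotientAddGroup.mk e₁ : QL L) - QuotientAddGroup.mk e₂) +
          ((QuotientAddGroup.mk e₁ : QL L) - QuotientAddGroup.mk e₂)) by simp [sh]]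
      exact neg_ne_zero.mpr d12
    · simp only [sh, sub_zero]
      apply top_mem
      · exact AddSubgroup.subset_closure (by simp)
      · have m1 : (QuotientAddGroup.mk e₁ : QL L) ∈
            AddSubgroup.closure {(QuotientAddGroup.mk e₁ : QL L),
              QuotientAddGroup.mk e₂ - QuotientAddGroup.mk e₁} :=
          AddSubgroup.subset_closure (by simp)
        have m2 : (QuotientAddGroup.mk e₂ : QL L) - QuotientAddGroup.mk e₁ ∈
            AddSubgroup.closure {(QuotientAddGroup.mk e₁ : QL L),
              QuotientAddGroup.mk e₂ - QuotientAddGroup.mk e₁} :=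
          AddSubgroup.subset_closure (by simp)
        have := AddSubgroup.add_mem _ m2 m1
        rwa [sub_add_cancel] at this
  -- (2,1) : (i,j,k) = (2,0,1)
  · refine run L S hsurv y₁ y₂ _ _ hdead 2 0 1 (by decide) (by decide) (by decide) ?_ ?_ ?_
    · simpa [sh, sub_zero] using ne2
    · simpa [sh, sub_zero] using d2
    · simp only [sh, sub_zero, zero_sub]
      apply top_mem
      · have m1 : -(QuotientAddGroup.mk e₁ : QL L) ∈
            AddSubgroup.closure {-(QuotientAddGroup.mk e₁ : QL L),
              (QuotientAddGroup.mk e₂ : QL L)} := AddSubgroup.subset_closure (by simp)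
        have := AddSubgroup.neg_mem _ m1
        rwa [neg_neg] at this
      · exact AddSubgroup.subset_closure (by simp)
  -- (2,2) : (i,j,k) = (0,1,2)
  · refine run L S hsurv y₁ y₂ _ _ hdead 0 1 2 (by decide) (by decide) (by decide) ?_ ?_ ?_
    · simp only [sh, zero_sub]
      exact neg_ne_zero.mpr ne1
    · simp only [sh, zero_sub, ← neg_add]
      exact neg_ne_zero.mpr d1
    · simp only [sh, zero_sub]
      apply top_mem
      · have m2 : -(QuotientAddGroup.mk e₁ : QL L) ∈
            AddSubgroup.closure {(QuotientAddGroup.mk e₁ : QL L) - QuotientAddGroup.mk e₂,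
              -(QuotientAddGroup.mk e₁ : QL L)} := AddSubgroup.subset_closure (by simp)
        have := AddSubgroup.neg_mem _ m2
        rwa [neg_neg] at this
      · have m1 : (QuotientAddGroup.mk e₁ : QL L) - QuotientAddGroup.mk e₂ ∈
            AddSubgroup.closure {(QuotientAddGroup.mk e₁ : QL L) - QuotientAddGroup.mk e₂,
              -(QuotientAddGroup.mk e₁ : QL L)} := AddSubgroup.subset_closure (by simp)
        have m2 : -(QuotientAddGroup.mk e₁ : QL L) ∈
            AddSubgroup.closure {(QuotientAddGroup.mk e₁ : QL L) - QuotientAddGroup.mk e₂,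
              -(QuotientAddGroup.mk e₁ : QL L)} := AddSubgroup.subset_closure (by simp)
        have := AddSubgroup.neg_mem _ (AddSubgroup.add_mem _ m1 m2)
        rwa [show -((QuotientAddGroup.mk e₁ : QL L) - QuotientAddGroup.mk e₂ +
          -(QuotientAddGroup.mk e₁ : QL L)) = QuotientAddGroup.mk e₂ by abel] at this

end THTaux

/-- Every truncated-hexagonal torus graph (type `{3,12,12}`) is 3-connected. -/
theorem truncHexTorusGraph_3connected (L : AddSubgroup (ℤ × ℤ)) (hL : Admissible L) :
    (truncHexTorusGraph L).KConnected 3 := by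
  classical
  obtain ⟨hfin, hbox⟩ := hL
  haveI : Finite ((ℤ × ℤ) ⧸ L) := hfin
  constructor
  · have h1 : 0 < Nat.card ((ℤ × ℤ) ⧸ L) := Nat.card_pos
    have h2 : Nat.card ((((ℤ × ℤ) ⧸ L) × Fin 2 × Fin 3)) =
        Nat.card ((ℤ × ℤ) ⧸ L) * 6 := by
      rw [Nat.card_prod, Nat.card_prod]
      simp [Nat.card_eq_fintype_card]
    omega
  · intro S hS
    obtain ⟨w₁, w₂, hS2⟩ := THTaux.two_elems S (by omega)
    have hsurv := THTaux.surv_of_two L S w₁ w₂ hS2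
    obtain ⟨c, hc⟩ := hsurv 0 0
    exact THTaux.conn_of_TR L S ⟨(0, 0, c), hc⟩ (THTaux.TR_all L S hbox w₁ w₂ hS2)
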